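/- (Topological amalgamated limit, existence form.) Let I be a distributive almost-lattice, let (X_i : i ∈ I) be nonempty compact Hausdorff spaces, and for i ≤ j let p^j_i : X_j → X_i be continuous open surjections such that p^k_i = p^j_i ∘ p^k_j for i ≤ j ≤ k (commutativity) and such that whenever i ∨ j exists and x_i ∈ X_i, x_j ∈ X_j satisfy p^i_{i∧j}(x_i) = p^j_{i∧j}(x_j), there is z ∈ X_{i∨j} with p^{i∨j}_i(z) = x_i and p^{i∨j}_j(z) = x_j (correctness). Then there exist a compact Hausdorff topological space X and continuous open surjections q_i : X → X_i for i ∈ I such that q_i = p^j_i ∘ q_j for all i ≤ j (commutativity), and such that for all i, j ∈ I and all x_i ∈ X_i, x_j ∈ X_j with p^i_{i∧j}(x_i) = p^j_{i∧j}(x_j) there is x ∈ X with q_i(x) = x_i and q_j(x) = x_j (correctness). -/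

import Mathlib

/-- A distributive almost-lattice: a partial order where any two elements have a meet,
any two elements with a common upper bound have a join, among any three elements two have
a common upper bound, the distributive laws hold whenever both sides exist, and
conditions (v) and (vi) hold. -/
structure DistribAlmostLattice (I : Type*) [PartialOrder I] where
  meet : I → I → I
  join : I → I → I
  /-- (i): `meet i j` is the greatest lower bound of `i` and `j` -/
  meet_isGLB : ∀ i j : I, IsGLB {i, j} (meet i j)
  /-- (ii): if `i`, `j` have a common upper bound, `join i j` is their least upper bound -/
  join_isLUB : ∀ i j : I, (∃ u, i ≤ u ∧ j ≤ u) → IsLUB {i, j} (join i j)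
  /-- (iii): among any three elements, two have a common upper bound -/
  two_of_three : ∀ i j k : I,
    (∃ u, i ≤ u ∧ j ≤ u) ∨ (∃ u, i ≤ u ∧ k ≤ u) ∨ (∃ u, j ≤ u ∧ k ≤ u)
  /-- (iv): distributivity of meet over join (whenever both sides exist) -/
  distrib_meet_join : ∀ i j k : I, (∃ u, j ≤ u ∧ k ≤ u) →
    meet i (join j k) = join (meet i j) (meet i k)
  /-- (iv): distributivity of join over meet (whenever both sides exist) -/
  distrib_join_meet : ∀ i j k : I, (∃ u, i ≤ u ∧ j ≤ u) → (∃ u, i ≤ u ∧ k ≤ u) →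
    join i (meet j k) = meet (join i j) (join i k)
  /-- (v) -/
  cond_v : ∀ i j j' : I, ¬(∃ u, i ≤ u ∧ j ≤ u) →
    ((¬(∃ u, i ≤ u ∧ j' ≤ u) ∧ ¬(∃ u, i ≤ u ∧ meet j j' ≤ u)) ∨
      join i j' = join i (meet j j'))
  /-- (vi) -/
  cond_vi : ∀ i j j' : I, ¬(∃ u, j ≤ u ∧ j' ≤ u) →
    join (meet i j) (meet i j') = i

namespace DistribAlmostLattice

variable {I : Type*} [PartialOrder I] (L : DistribAlmostLattice I)

theorem meet_le_left (i j : I) : L.meet i j ≤ i :=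
  (L.meet_isGLB i j).1 (Set.mem_insert _ _)

theorem meet_le_right (i j : I) : L.meet i j ≤ j :=
  (L.meet_isGLB i j).1 (Set.mem_insert_of_mem _ rfl)

theorem le_join_left (i j : I) (h : ∃ u, i ≤ u ∧ j ≤ u) : i ≤ L.join i j :=
  (L.join_isLUB i j h).1 (Set.mem_insert _ _)

theorem le_join_right (i j : I) (h : ∃ u, i ≤ u ∧ j ≤ u) : j ≤ L.join i j :=
  (L.join_isLUB i j h).1 (Set.mem_insert_of_mem _ rfl)

end DistribAlmostLattice

/-- A subset `F` of a distributive almost-lattice is closed if it is closed under meets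
and under joins whenever they exist. -/
def IsClosedSubset {I : Type*} [PartialOrder I] (L : DistribAlmostLattice I)
    (F : Set I) : Prop :=
  ∀ i ∈ F, ∀ j ∈ F, L.meet i j ∈ F ∧ ((∃ u, i ≤ u ∧ j ≤ u) → L.join i j ∈ F)

/-!
The limit is the space of threads `f ∈ ∏ i, X i` (with `p^j_i (f j) = f i`), a closed subset of a
compact Hausdorff product, and `q i` is evaluation at `i`. Everything rests on one extension
property: points `x ∈ X i`, `y ∈ X j` with the same image in `X (i ∧ j)` lie on a common thread.
By compactness it suffices to find, for each finite `s ⊆ I`, a family through `x` and `y` that is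
compatible on `s`. Axiom (iii) covers `s` by the down-sets of two elements `k₁, k₂` with `i ≤ k₁`,
and two applications of correctness produce `z₁ ∈ X k₁`, `z₂ ∈ X k₂` that agree in `X (k₁ ∧ k₂)`
and lie over `x` and `y`; their projections give the family. The same covers give openness: a
basic neighbourhood of a thread only constrains two coordinates `k₁ ≥ i` and `k₂`, and its image
in `X i` contains `p^{k₁}_i (A₁ ∩ (p^{k₁}_c)⁻¹ (p^{k₂}_c A₂))` with `c = k₁ ∧ k₂`, which is open
because the bonding maps are open and continuous.
-/

namespace DistribAlmostLattice

variable {I : Type*} [PartialOrder I] (L : DistribAlmostLattice I)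

theorem le_meet {i j m : I} (hi : m ≤ i) (hj : m ≤ j) : m ≤ L.meet i j :=
  (L.meet_isGLB i j).2 (by rintro _ (rfl | rfl) <;> assumption)

theorem join_le {i j k : I} (hi : i ≤ k) (hj : j ≤ k) : L.join i j ≤ k :=
  (L.join_isLUB i j ⟨k, hi, hj⟩).2 (by rintro _ (rfl | rfl) <;> assumption)

include L in
theorem exists_two_cover (i : I) (s : Finset I) :
    ∃ k₁ k₂, i ≤ k₁ ∧ ∀ a ∈ s, a ≤ k₁ ∨ a ≤ k₂ := by
  classical
  induction s using Finset.induction_on with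
  | empty => exact ⟨i, i, le_rfl, by simp⟩
  | insert b t _ ih =>
    obtain ⟨k₁, k₂, hi, ht⟩ := ih
    simp only [Finset.forall_mem_insert]
    rcases L.two_of_three b k₁ k₂ with ⟨u, hb, h₁⟩ | ⟨u, hb, h₂⟩ | ⟨u, h₁, h₂⟩
    · exact ⟨u, k₂, hi.trans h₁, Or.inl hb, fun a ha => (ht a ha).imp_left (·.trans h₁)⟩
    · exact ⟨k₁, u, hi, Or.inr hb, fun a ha => (ht a ha).imp_right (·.trans h₂)⟩
    · exact ⟨u, b, hi.trans h₁, Or.inr le_rfl,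
        fun a ha => Or.inl ((ht a ha).elim (·.trans h₁) (·.trans h₂))⟩

end DistribAlmostLattice

section InverseSystem

variable {I : Type*} [PartialOrder I] {X : I → Type*} (p : ∀ i j : I, i ≤ j → X j → X i)

def threadsOn (s : Set I) : Set (∀ i, X i) :=
  {f | ∀ a ∈ s, ∀ b ∈ s, ∀ h : a ≤ b, p a b h (f b) = f a}

def threads : Set (∀ i, X i) :=
  {f | ∀ a b, ∀ h : a ≤ b, p a b h (f b) = f a}

-- Equivalent to the paper's `p^i_{i∧j} x = p^j_{i∧j} y` (see `coherent_of_proj_meet`).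
def Coherent {i j : I} (x : X i) (y : X j) : Prop :=
  ∀ m (hi : m ≤ i) (hj : m ≤ j), p m i hi x = p m j hj y

variable {p}

theorem threadsOn_anti {s t : Set I} (hst : s ⊆ t) : threadsOn p t ⊆ threadsOn p s :=
  fun _ hf a ha b hb h => hf a (hst ha) b (hst hb) h

theorem iInter_threadsOn_finset : ⋂ s : Finset I, threadsOn p (s : Set I) = threads p := by
  classical
  ext f
  simp only [Set.mem_iInter]
  exact ⟨fun hf a b h => hf ({a, b} : Finset I) a (by simp) b (by simp) h,
    fun hf _ a _ b _ h => hf a b h⟩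

theorem Coherent.symm {i j : I} {x : X i} {y : X j} (h : Coherent p x y) : Coherent p y x :=
  fun m hi hj => (h m hj hi).symm

variable (hsurj : ∀ i j : I, ∀ hij : i ≤ j, Function.Surjective (p i j hij))
variable (hcomp : ∀ i j k : I, ∀ hij : i ≤ j, ∀ hjk : j ≤ k, ∀ x : X k,
  p i j hij (p j k hjk x) = p i k (hij.trans hjk) x)

include hcomp in
theorem Coherent.proj_right {i j t : I} {x : X i} {y : X j} (h : Coherent p x y) (ht : t ≤ j) :
    Coherent p x (p t j ht y) :=
  fun m hi hm => by rw [hcomp]; exact h m hi _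

include hcomp in
theorem Coherent.proj_left {i j s : I} {x : X i} {y : X j} (h : Coherent p x y) (hs : s ≤ i) :
    Coherent p (p s i hs x) y :=
  (h.symm.proj_right hcomp hs).symm

include hsurj hcomp in
theorem proj_self {i : I} (h : i ≤ i) (x : X i) : p i i h x = x := by
  obtain ⟨w, rfl⟩ := hsurj i i h x
  exact hcomp i i i h h w

include hsurj hcomp in
theorem Coherent.proj_eq {i j : I} {x : X i} {y : X j} (h : Coherent p x y) (hji : j ≤ i) :
    p j i hji x = y := by
  rw [h j hji le_rfl, proj_self hsurj hcomp]

include hcomp in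
theorem Coherent.exists_mem_threadsOn [∀ i, Nonempty (X i)] {k₁ k₂ : I} {z₁ : X k₁} {z₂ : X k₂}
    (h : Coherent p z₁ z₂) :
    ∃ f ∈ threadsOn p {a | a ≤ k₁ ∨ a ≤ k₂},
      (∀ a (ha : a ≤ k₁), f a = p a k₁ ha z₁) ∧ (∀ a (ha : a ≤ k₂), f a = p a k₂ ha z₂) := by
  classical
  let f : ∀ a, X a := fun a =>
    if ha : a ≤ k₁ then p a k₁ ha z₁
    else if ha : a ≤ k₂ then p a k₂ ha z₂ else Classical.arbitrary _
  have hf₁ : ∀ a (ha : a ≤ k₁), f a = p a k₁ ha z₁ := fun a ha => dif_pos ha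
  have hf₂ : ∀ a (ha : a ≤ k₂), f a = p a k₂ ha z₂ := fun a ha => by
    by_cases ha₁ : a ≤ k₁
    · exact (dif_pos ha₁).trans (h a ha₁ ha)
    · exact (dif_neg ha₁).trans (dif_pos ha)
  refine ⟨f, ?_, hf₁, hf₂⟩
  rintro a - b (hb | hb) hab
  · rw [hf₁ b hb, hf₁ a (hab.trans hb), hcomp]
  · rw [hf₂ b hb, hf₂ a (hab.trans hb), hcomp]

variable (L : DistribAlmostLattice I)

include hcomp in
theorem coherent_of_proj_meet {i j : I} {x : X i} {y : X j}
    (h : p (L.meet i j) i (L.meet_le_left i j) x = p (L.meet i j) j (L.meet_le_right i j) y) :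
    Coherent p x y := fun m hi hj => by
  have hm := L.le_meet hi hj
  rw [← hcomp m _ i hm (L.meet_le_left i j), h, hcomp]

variable (hcor : ∀ i j : I, ∀ hub : ∃ u, i ≤ u ∧ j ≤ u, ∀ xi : X i, ∀ xj : X j,
  p (L.meet i j) i (L.meet_le_left i j) xi = p (L.meet i j) j (L.meet_le_right i j) xj →
  ∃ z : X (L.join i j),
    p i (L.join i j) (L.le_join_left i j hub) z = xi ∧
    p j (L.join i j) (L.le_join_right i j hub) z = xj)

include hsurj hcomp hcor in
theorem Coherent.exists_lift {i j k : I} {x : X i} {y : X j} (h : Coherent p x y)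
    (hik : i ≤ k) (hjk : j ≤ k) : ∃ z : X k, p i k hik z = x ∧ p j k hjk z = y := by
  obtain ⟨z, hzx, hzy⟩ := hcor i j ⟨k, hik, hjk⟩ x y (h _ _ _)
  obtain ⟨w, rfl⟩ := hsurj _ k (L.join_le hik hjk) z
  exact ⟨w, (hcomp i _ k _ _ w).symm.trans hzx, (hcomp j _ k _ _ w).symm.trans hzy⟩

include hsurj hcomp hcor in
theorem Coherent.exists_coherent_pair {i j k₁ : I} {x : X i} {y : X j} (h : Coherent p x y)
    (hik : i ≤ k₁) (k₂ : I) :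
    ∃ (z₁ : X k₁) (z₂ : X k₂), p i k₁ hik z₁ = x ∧
      Coherent p z₁ y ∧ Coherent p z₂ y ∧ Coherent p z₁ z₂ := by
  -- `z₁` lies over `x` and over the image of `y` in `X (k₁ ∧ j)`; then `z₂` lies over the
  -- images of `z₁` in `X (k₁ ∧ k₂)` and of `y` in `X (k₂ ∧ j)`.
  obtain ⟨z₁, hz₁x, hz₁y⟩ := (h.proj_right hcomp (L.meet_le_right k₁ j)).exists_lift
    hsurj hcomp L hcor hik (L.meet_le_left k₁ j)
  have hz₁ : Coherent p z₁ y := coherent_of_proj_meet hcomp L hz₁y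
  have hz₁' := (hz₁.proj_left hcomp (L.meet_le_left k₁ k₂)).proj_right hcomp (L.meet_le_right k₂ j)
  obtain ⟨z₂, hz₂z₁, hz₂y⟩ :=
    hz₁'.exists_lift hsurj hcomp L hcor (L.meet_le_right k₁ k₂) (L.meet_le_left k₂ j)
  exact ⟨z₁, z₂, hz₁x, hz₁, coherent_of_proj_meet hcomp L hz₂y,
    coherent_of_proj_meet hcomp L hz₂z₁.symm⟩

include hsurj hcomp hcor in
theorem Coherent.exists_mem_threadsOn_finset [∀ i, Nonempty (X i)] {i j : I} {x : X i} {y : X j}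
    (h : Coherent p x y) (s : Finset I) : ∃ f ∈ threadsOn p s, f i = x ∧ f j = y := by
  classical
  obtain ⟨k₁, k₂, hik, hcover⟩ := L.exists_two_cover i (insert j s)
  obtain ⟨z₁, z₂, hz₁x, hz₁y, hz₂y, hz⟩ := h.exists_coherent_pair hsurj hcomp L hcor hik k₂
  obtain ⟨f, hf, hf₁, hf₂⟩ := hz.exists_mem_threadsOn hcomp
  refine ⟨f, threadsOn_anti (fun a ha => hcover a (Finset.mem_insert_of_mem ha)) hf,
    (hf₁ i hik).trans hz₁x, ?_⟩
  rcases hcover j (Finset.mem_insert_self j s) with hj | hj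
  · rw [hf₁ j hj, hz₁y.proj_eq hsurj hcomp]
  · rw [hf₂ j hj, hz₂y.proj_eq hsurj hcomp]

variable [∀ i, TopologicalSpace (X i)]
variable (hcont : ∀ i j : I, ∀ hij : i ≤ j, Continuous (p i j hij))

include hcont in
theorem isClosed_threadsOn [∀ i, T2Space (X i)] (s : Set I) : IsClosed (threadsOn p s) := by
  simp only [threadsOn, Set.ofPred_forall]
  exact isClosed_biInter fun a _ => isClosed_biInter fun b _ => isClosed_iInter fun h =>
    isClosed_eq ((hcont a b h).comp (continuous_apply b)) (continuous_apply a)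

include hcont in
theorem isClosed_threads [∀ i, T2Space (X i)] : IsClosed (threads p) :=
  iInter_threadsOn_finset (p := p) ▸ isClosed_iInter fun s => isClosed_threadsOn hcont s

include hsurj hcomp hcor hcont in
theorem Coherent.exists_mem_threads [∀ i, CompactSpace (X i)] [∀ i, T2Space (X i)]
    {i j : I} {x : X i} {y : X j} (h : Coherent p x y) : ∃ f ∈ threads p, f i = x ∧ f j = y := by
  have : ∀ a, Nonempty (X a) := fun a =>
    ⟨(hsurj _ a (L.meet_le_left a i) (p _ i (L.meet_le_right a i) x)).choose⟩
  let K : Finset I → Set (∀ a, X a) := fun s => ({f | f i = x} ∩ {f | f j = y}) ∩ threadsOn p s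
  have hK : ∀ s, IsClosed (K s) := fun s =>
    ((isClosed_eq (continuous_apply i) continuous_const).inter
      (isClosed_eq (continuous_apply j) continuous_const)).inter (isClosed_threadsOn hcont s)
  have hK_anti : Antitone K := fun s t hst =>
    Set.inter_subset_inter_right _ (threadsOn_anti (Finset.coe_subset.2 hst))
  have hK_ne : ∀ s, (K s).Nonempty := fun s => by
    obtain ⟨f, hf, hfx, hfy⟩ := h.exists_mem_threadsOn_finset hsurj hcomp L hcor s
    exact ⟨f, ⟨hfx, hfy⟩, hf⟩
  obtain ⟨f, hf⟩ := IsCompact.nonempty_iInter_of_directed_nonempty_isCompact_isClosed K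
    hK_anti.directed_ge hK_ne (fun s => (hK s).isCompact) hK
  rw [Set.mem_iInter] at hf
  refine ⟨f, ?_, (hf ∅).1.1, (hf ∅).1.2⟩
  rw [← iInter_threadsOn_finset]
  exact Set.mem_iInter.2 fun s => (hf s).2

include hsurj hcomp hcor hcont in
theorem proj_image_subset_image_eval_threads [∀ i, CompactSpace (X i)] [∀ i, T2Space (X i)]
    {i k₁ k₂ : I} (hik : i ≤ k₁) (A₁ : Set (X k₁)) (A₂ : Set (X k₂)) :
    p i k₁ hik '' (A₁ ∩ p _ k₁ (L.meet_le_left k₁ k₂) ⁻¹' (p _ k₂ (L.meet_le_right k₁ k₂) '' A₂))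
      ⊆ (fun f => f i) '' {f ∈ threads p | f k₁ ∈ A₁ ∧ f k₂ ∈ A₂} := by
  rintro _ ⟨z₁, ⟨hz₁, z₂, hz₂, hz⟩, rfl⟩
  obtain ⟨f, hf, hf₁, hf₂⟩ :=
    (coherent_of_proj_meet hcomp L hz.symm).exists_mem_threads hsurj hcomp L hcor hcont
  exact ⟨f, ⟨hf, hf₁ ▸ hz₁, hf₂ ▸ hz₂⟩, by rw [← hf₁, hf]⟩

include L hcont in
theorem exists_two_coord_nhds_subset {f : ∀ a, X a} (hf : f ∈ threads p)
    {O : Set (∀ a, X a)} (hO : IsOpen O) (hfO : f ∈ O) (i : I) :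
    ∃ (k₁ k₂ : I) (A₁ : Set (X k₁)) (A₂ : Set (X k₂)), i ≤ k₁ ∧ IsOpen A₁ ∧ IsOpen A₂ ∧
      f k₁ ∈ A₁ ∧ f k₂ ∈ A₂ ∧ {g ∈ threads p | g k₁ ∈ A₁ ∧ g k₂ ∈ A₂} ⊆ O := by
  obtain ⟨F, u, hu, hFO⟩ := isOpen_pi_iff.mp hO f hfO
  obtain ⟨k₁, k₂, hik, hcover⟩ := L.exists_two_cover i F
  let A : ∀ k, Set (X k) := fun k => {z | ∀ a ∈ F, ∀ h : a ≤ k, p a k h z ∈ u a}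
  have hA : ∀ k, IsOpen (A k) := fun k => by
    simp only [A, Set.ofPred_forall]
    exact isOpen_biInter_finset fun a ha =>
      isOpen_iInter_of_finite fun h => (hu a ha).1.preimage (hcont a k h)
  have hfA : ∀ k, f k ∈ A k := fun k a ha h => (hf a k h).symm ▸ (hu a ha).2
  refine ⟨k₁, k₂, A k₁, A k₂, hik, hA k₁, hA k₂, hfA k₁, hfA k₂, ?_⟩
  rintro g ⟨hg, hg₁, hg₂⟩
  refine hFO fun a ha => ?_
  rcases hcover a ha with h | h
  · exact hg a k₁ h ▸ hg₁ a ha h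
  · exact hg a k₂ h ▸ hg₂ a ha h

variable (hopen : ∀ i j : I, ∀ hij : i ≤ j, IsOpenMap (p i j hij))

include hsurj hcomp hcor hcont hopen in
theorem isOpenMap_eval_threads [∀ i, CompactSpace (X i)] [∀ i, T2Space (X i)] (i : I) :
    IsOpenMap fun f : threads p => f.1 i := by
  intro U hU
  obtain ⟨O, hO, rfl⟩ := isOpen_induced_iff.mp hU
  rw [isOpen_iff_forall_mem_open]
  rintro _ ⟨f, hfO, rfl⟩
  obtain ⟨k₁, k₂, A₁, A₂, hik, hA₁, hA₂, hf₁, hf₂, hsub⟩ :=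
    exists_two_coord_nhds_subset L hcont f.2 hO hfO i
  refine ⟨_, (proj_image_subset_image_eval_threads hsurj hcomp L hcor hcont hik A₁ A₂).trans ?_,
    hopen _ _ hik _ (hA₁.inter ((hopen _ _ _ _ hA₂).preimage (hcont _ _ _))),
    f.1 k₁, ⟨hf₁, f.1 k₂, hf₂, (f.2 _ _ _).trans (f.2 _ _ _).symm⟩, f.2 i k₁ hik⟩
  rintro _ ⟨g, ⟨hg, hgA⟩, rfl⟩
  exact ⟨⟨g, hg⟩, hsub ⟨hg, hgA⟩, rfl⟩

end InverseSystem

theorem topological_amalgamated_limit_general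
    {I : Type u} [PartialOrder I] (L : DistribAlmostLattice I)
    (X : I → Type v) [∀ i, TopologicalSpace (X i)]
    [∀ i, CompactSpace (X i)] [∀ i, T2Space (X i)]
    (p : ∀ i j : I, i ≤ j → X j → X i)
    (hcont : ∀ i j : I, ∀ hij : i ≤ j, Continuous (p i j hij))
    (hopen : ∀ i j : I, ∀ hij : i ≤ j, IsOpenMap (p i j hij))
    (hsurj : ∀ i j : I, ∀ hij : i ≤ j, Function.Surjective (p i j hij))
    (hcomp : ∀ i j k : I, ∀ hij : i ≤ j, ∀ hjk : j ≤ k, ∀ x : X k,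
      p i j hij (p j k hjk x) = p i k (hij.trans hjk) x)
    (hcor : ∀ i j : I, ∀ hub : ∃ u, i ≤ u ∧ j ≤ u, ∀ xi : X i, ∀ xj : X j,
      p (L.meet i j) i (L.meet_le_left i j) xi =
        p (L.meet i j) j (L.meet_le_right i j) xj →
      ∃ z : X (L.join i j),
        p i (L.join i j) (L.le_join_left i j hub) z = xi ∧
        p j (L.join i j) (L.le_join_right i j hub) z = xj) :
    ∃ (Y : Type (max u v)) (tY : TopologicalSpace Y),
      @CompactSpace Y tY ∧ @T2Space Y tY ∧
      ∃ q : ∀ i : I, Y → X i,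
        (∀ i : I, @Continuous Y (X i) tY inferInstance (q i) ∧
          @IsOpenMap Y (X i) tY inferInstance (q i) ∧
          Function.Surjective (q i)) ∧
        (∀ i j : I, ∀ hij : i ≤ j, ∀ y : Y, p i j hij (q j y) = q i y) ∧
        (∀ i j : I, ∀ xi : X i, ∀ xj : X j,
          p (L.meet i j) i (L.meet_le_left i j) xi =
            p (L.meet i j) j (L.meet_le_right i j) xj →
          ∃ y : Y, q i y = xi ∧ q j y = xj) := by
  have lift (i j : I) (x : X i) (y : X j) (h : Coherent p x y) :
      ∃ f : threads p, f.1 i = x ∧ f.1 j = y := by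
    obtain ⟨f, hf, hfx, hfy⟩ := h.exists_mem_threads hsurj hcomp L hcor hcont
    exact ⟨⟨f, hf⟩, hfx, hfy⟩
  refine ⟨threads p, inferInstance,
    isCompact_iff_compactSpace.mp (isClosed_threads hcont).isCompact, inferInstance,
    fun i f => f.1 i, fun i => ⟨?_, ?_, fun x => ?_⟩, fun i j h f => f.2 i j h,
    fun i j x y h => lift i j x y (coherent_of_proj_meet hcomp L h)⟩
  · exact (continuous_apply i).comp continuous_subtype_val
  · exact isOpenMap_eval_threads hsurj hcomp L hcor hcont hopen i
  · obtain ⟨f, hfx, -⟩ := lift i i x x fun _ _ _ => rfl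
    exact ⟨f, hfx⟩

/-- Topological amalgamated limit, existence form: given a correct commuting system of
nonempty compact Hausdorff spaces with continuous open surjections over a distributive
almost-lattice, there is a compact Hausdorff space mapping onto all of them by continuous
open surjections, commuting with the system and satisfying correctness. -/
theorem topological_amalgamated_limit
    {I : Type u} [PartialOrder I] (L : DistribAlmostLattice I)
    (X : I → Type v) [∀ i, TopologicalSpace (X i)]
    [∀ i, Nonempty (X i)] [∀ i, CompactSpace (X i)] [∀ i, T2Space (X i)]
    (p : ∀ i j : I, i ≤ j → X j → X i)
    (hcont : ∀ i j : I, ∀ hij : i ≤ j, Continuous (p i j hij))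
    (hopen : ∀ i j : I, ∀ hij : i ≤ j, IsOpenMap (p i j hij))
    (hsurj : ∀ i j : I, ∀ hij : i ≤ j, Function.Surjective (p i j hij))
    (hcomp : ∀ i j k : I, ∀ hij : i ≤ j, ∀ hjk : j ≤ k, ∀ x : X k,
      p i j hij (p j k hjk x) = p i k (hij.trans hjk) x)
    (hcor : ∀ i j : I, ∀ hub : ∃ u, i ≤ u ∧ j ≤ u, ∀ xi : X i, ∀ xj : X j,
      p (L.meet i j) i (L.meet_le_left i j) xi =
        p (L.meet i j) j (L.meet_le_right i j) xj →
      ∃ z : X (L.join i j),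
        p i (L.join i j) (L.le_join_left i j hub) z = xi ∧
        p j (L.join i j) (L.le_join_right i j hub) z = xj) :
    ∃ (Y : Type (max u v)) (tY : TopologicalSpace Y),
      @CompactSpace Y tY ∧ @T2Space Y tY ∧
      ∃ q : ∀ i : I, Y → X i,
        (∀ i : I, @Continuous Y (X i) tY inferInstance (q i) ∧
          @IsOpenMap Y (X i) tY inferInstance (q i) ∧
          Function.Surjective (q i)) ∧
        (∀ i j : I, ∀ hij : i ≤ j, ∀ y : Y, p i j hij (q j y) = q i y) ∧
        (∀ i j : I, ∀ xi : X i, ∀ xj : X j,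
          p (L.meet i j) i (L.meet_le_left i j) xi =
            p (L.meet i j) j (L.meet_le_right i j) xj →
          ∃ y : Y, q i y = xi ∧ q j y = xj) :=
  topological_amalgamated_limit_general L X p hcont hopen hsurj hcomp hcor
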